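/- Let E ∈ ℂ^{n×n} be Hermitian, F, H ∈ ℂ^{m×n}, G ∈ ℂ^{m×m} Hermitian, q ∈ ℂⁿ, r ∈ ℂᵐ, and let û ∈ ℂⁿ, p̂ ∈ ℂᵐ. Fix positive weights α₁, α₂, α₃, α₄, β₁, β₂. Set Q = q − Eû − F*p̂, R = r − Hû − Gp̂, N₁ = J_S^n Φ_E D_{S,n}⁻¹, N₂ = J_SK^n Ψ_E D_{SK,n}⁻¹, S₁ = J_S^m Φ_G D_{S,m}⁻¹, S₂ = J_SK^m Ψ_G D_{SK,m}⁻¹. Define X̂₁ = [[α₁⁻¹(ℜ(û)ᵀ⊗Iₙ)N₁, −α₁⁻¹(ℑ(û)ᵀ⊗Iₙ)N₂, α₂⁻¹(Iₙ⊗ℜ(p̂)ᵀ)Σ_F, α₂⁻¹(Iₙ⊗ℑ(p̂)ᵀ)Σ_F],[α₁⁻¹(ℑ(û)ᵀ⊗Iₙ)N₁, α₁⁻¹(ℜ(û)ᵀ⊗Iₙ)N₂, α₂⁻¹(Iₙ⊗ℑ(p̂)ᵀ)Σ_F, −α₂⁻¹(Iₙ⊗ℜ(p̂)ᵀ)Σ_F]]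 ∈ ℝ^{2n×(n²+2mn)}, M̂₂ = [[α₃⁻¹(ℜ(û)ᵀ⊗I_m)Σ_H, −α₃⁻¹(ℑ(û)ᵀ⊗I_m)Σ_H, α₄⁻¹(ℜ(p̂)ᵀ⊗I_m)S₁, −α₄⁻¹(ℑ(p̂)ᵀ⊗I_m)S₂],[α₃⁻¹(ℑ(û)ᵀ⊗I_m)Σ_H, α₃⁻¹(ℜ(û)ᵀ⊗I_m)Σ_H, α₄⁻¹(ℑ(p̂)ᵀ⊗I_m)S₁, α₄⁻¹(ℜ(p̂)ᵀ⊗I_m)S₂]] ∈ ℝ^{2m×(2mn+m²)}, M₁ = [X̂₁, 0_{2n×(m²+2mn)}], M₂ = [0_{2m×(n²+2mn)}, M̂₂], I₁ = [−β₁⁻¹I_{2n}, 0_{2n×2m}], I₂ = [0_{2m×2n}, −β₂⁻¹I_{2m}], and M = [[M₁, I₁],[M₂, I₂]]. Then MMᵀ is invertible, and the sparsity-preserving structured backward error ξ^{G₃}_sps(û,p̂) := inf{ ζ^{σ₂}(ΔE⊙Θ_E, ΔF⊙Θ_F, ΔH⊙Θ_H, ΔG⊙Θ_G, Δq, Δr)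 : ΔE ∈ ℂ^{n×n} Hermitian, ΔF, ΔH ∈ ℂ^{m×n}, ΔG ∈ ℂ^{m×m} Hermitian, Δq ∈ ℂⁿ, Δr ∈ ℂᵐ, (E+ΔE⊙Θ_E)û + (F+ΔF⊙Θ_F)*p̂ = q+Δq and (H+ΔH⊙Θ_H)û + (G+ΔG⊙Θ_G)p̂ = r+Δr } is attained and equals ‖Mᵀ(MMᵀ)⁻¹[ℜ(Q); ℑ(Q); ℜ(R); ℑ(R)]‖₂. -/

import Mathlib

/-!
Splitting into real and imaginary parts and vectorizing turns the admissible perturbations into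
real vectors: the `E`- and `G`-blocks are Hermitian, so their real parts are symmetric and their
imaginary parts skew, and they are stored by their (strictly) lower triangles, weighted by
`D_S`, `D_SK` and the `αᵢ`, `βᵢ` so that the Euclidean norm of the coordinate vector `x` is
`ζ^{σ₂}`. The perturbed equations, real and imaginary parts separately, then read `M x = w`.
The minimum-norm solution `Mᵀ(MMᵀ)⁻¹w` of `M x = w` therefore gives the lower bound, and it is
itself admissible: it lies in the range of `Mᵀ`, and the columns of `M` indexed by zero entries
of the sparsity patterns vanish. `MMᵀ` is invertible because the last block column of `M` is
`-diag(β₁⁻¹ I, β₂⁻¹ I)`.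
-/

open Matrix

noncomputable section

namespace GSPPBE

/-- Entrywise real part of a complex matrix. -/
def reM {I J : Type*} (A : Matrix I J ℂ) : Matrix I J ℝ := A.map Complex.re

/-- Entrywise imaginary part of a complex matrix. -/
def imM {I J : Type*} (A : Matrix I J ℂ) : Matrix I J ℝ := A.map Complex.im

/-- Entrywise real part of a complex vector. -/
def reV {I : Type*} (v : I → ℂ) : I → ℝ := fun i => (v i).re

/-- Entrywise imaginary part of a complex vector. -/
def imV {I : Type*} (v : I → ℂ) : I → ℝ := fun i => (v i).im

/-- Frobenius norm of a matrix. -/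
def frob {I J α : Type*} [Fintype I] [Fintype J] [SeminormedAddGroup α]
    (A : Matrix I J α) : ℝ :=
  Real.sqrt (∑ i, ∑ j, ‖A i j‖ ^ 2)

/-- Euclidean norm of a (finitely indexed) vector. -/
def eunorm {I α : Type*} [Fintype I] [SeminormedAddGroup α] (v : I → α) : ℝ :=
  Real.sqrt (∑ i, ‖v i‖ ^ 2)

/-- Column-major vectorization: `vecM A (j, i) = A i j`. -/
def vecM {I J α : Type*} (A : Matrix I J α) : J × I → α := fun p => A p.2 p.1

/-- Index type for the lower triangle including the diagonal (positions of `vec_S`);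
it has `m(m+1)/2` elements. -/
abbrev SymIdx (m : ℕ) := {p : Fin m × Fin m // p.2 ≤ p.1}

/-- Index type for the strictly lower triangle (positions of `vec_SK`);
it has `m(m-1)/2` elements. -/
abbrev SkewIdx (m : ℕ) := {p : Fin m × Fin m // p.2 < p.1}

/-- `vec_S` of a (symmetric) matrix: its lower-triangular entries `Z i j`, `j ≤ i`. -/
def vecS {m : ℕ} {α : Type*} (Z : Matrix (Fin m) (Fin m) α) : SymIdx m → α :=
  fun p => Z p.1.1 p.1.2

/-- `vec_SK` of a (skew-symmetric) matrix: its strictly lower-triangular entries `Z i j`, `j < i`. -/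
def vecSK {m : ℕ} {α : Type*} (Z : Matrix (Fin m) (Fin m) α) : SkewIdx m → α :=
  fun p => Z p.1.1 p.1.2

/-- `J_S^m`: its column at position `(i,j)`, `j ≤ i`, is `vec(eᵢeⱼᵀ + eⱼeᵢᵀ)` for `i > j` and
`vec(eⱼeⱼᵀ)` for `i = j`.  Rows are vec positions `(column, row)`. -/
def JS (m : ℕ) : Matrix (Fin m × Fin m) (SymIdx m) ℝ :=
  Matrix.of fun cr p =>
    (if cr.2 = p.1.1 ∧ cr.1 = p.1.2 then (1 : ℝ) else 0) +
    (if p.1.1 ≠ p.1.2 ∧ cr.2 = p.1.2 ∧ cr.1 = p.1.1 then 1 else 0)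

/-- `J_SK^m`: its column at position `(i,j)`, `j < i`, is `vec(eᵢeⱼᵀ − eⱼeᵢᵀ)`. -/
def JSK (m : ℕ) : Matrix (Fin m × Fin m) (SkewIdx m) ℝ :=
  Matrix.of fun cr p =>
    (if cr.2 = p.1.1 ∧ cr.1 = p.1.2 then (1 : ℝ) else 0) -
    (if cr.2 = p.1.2 ∧ cr.1 = p.1.1 then 1 else 0)

open Classical in
/-- Sign pattern `Θ_X` of a matrix, with values in the same ring. -/
def theta {I J α : Type*} [Zero α] [One α] (X : Matrix I J α) : Matrix I J α :=
  Matrix.of fun i j => if X i j = 0 then 0 else 1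

open Classical in
/-- Real-valued sign pattern `Θ_X` of a matrix. -/
def thetaR {I J α : Type*} [Zero α] (X : Matrix I J α) : Matrix I J ℝ :=
  Matrix.of fun i j => if X i j = 0 then 0 else 1

/-- `Φ_X = diag(vec_S(Θ_X))`. -/
def Phi {m : ℕ} {α : Type*} [Zero α] (X : Matrix (Fin m) (Fin m) α) :
    Matrix (SymIdx m) (SymIdx m) ℝ :=
  Matrix.diagonal (vecS (thetaR X))

/-- `Ψ_X`: diagonal matrix listing the strictly lower-triangular entries of `Θ_X`
in `vec_SK` ordering. -/
def Psi {m : ℕ} {α : Type*} [Zero α] (X : Matrix (Fin m) (Fin m) α) :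
    Matrix (SkewIdx m) (SkewIdx m) ℝ :=
  Matrix.diagonal (vecSK (thetaR X))

/-- `Σ_X = diag(vec(Θ_X))`. -/
def Sig {I J α : Type*} [DecidableEq I] [DecidableEq J] [Zero α]
    (X : Matrix I J α) : Matrix (J × I) (J × I) ℝ :=
  Matrix.diagonal (vecM (thetaR X))

/-- `D_{S,m}`: diagonal entry `1` at the positions of diagonal entries `(j,j)`, `√2` elsewhere. -/
def DS (m : ℕ) : Matrix (SymIdx m) (SymIdx m) ℝ :=
  Matrix.diagonal fun p => if p.1.1 = p.1.2 then 1 else Real.sqrt 2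

/-- `D_{SK,m} = √2·I`. -/
def DSK (m : ℕ) : Matrix (SkewIdx m) (SkewIdx m) ℝ :=
  Matrix.diagonal fun _ => Real.sqrt 2

/-- `uᵀ ⊗ I_b`, viewed as a matrix acting on column-major vectorizations of `b×a` matrices. -/
def rowKronId {a b : ℕ} (u : Fin a → ℝ) : Matrix (Fin b) (Fin a × Fin b) ℝ :=
  Matrix.of fun r p => u p.1 * (if r = p.2 then 1 else 0)

/-- `I_a ⊗ vᵀ`, viewed as a matrix acting on column-major vectorizations of `b×a` matrices. -/
def idKronRow {a b : ℕ} (v : Fin b → ℝ) : Matrix (Fin a) (Fin a × Fin b) ℝ :=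
  Matrix.of fun r p => (if r = p.1 then 1 else 0) * v p.2

/-- The weighted norm `ζ^{σ₁}(A,B,C,q,r)`. -/
def zeta1 {n m : ℕ} {α : Type*} [SeminormedAddGroup α]
    (α₁ α₂ α₃ β₁ β₂ : ℝ)
    (A : Matrix (Fin n) (Fin n) α) (B : Matrix (Fin m) (Fin n) α)
    (C : Matrix (Fin m) (Fin m) α) (q : Fin n → α) (r : Fin m → α) : ℝ :=
  Real.sqrt (α₁ ^ 2 * frob A ^ 2 + α₂ ^ 2 * frob B ^ 2 + α₃ ^ 2 * frob C ^ 2 +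
    β₁ ^ 2 * eunorm q ^ 2 + β₂ ^ 2 * eunorm r ^ 2)

/-- The weighted norm `ζ^{σ₂}(A,B,H,C,q,r)`. -/
def zeta2 {n m : ℕ} {α : Type*} [SeminormedAddGroup α]
    (α₁ α₂ α₃ α₄ β₁ β₂ : ℝ)
    (A : Matrix (Fin n) (Fin n) α) (B : Matrix (Fin m) (Fin n) α)
    (H : Matrix (Fin m) (Fin n) α) (C : Matrix (Fin m) (Fin m) α)
    (q : Fin n → α) (r : Fin m → α) : ℝ :=
  Real.sqrt (α₁ ^ 2 * frob A ^ 2 + α₂ ^ 2 * frob B ^ 2 + α₃ ^ 2 * frob H ^ 2 +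
    α₄ ^ 2 * frob C ^ 2 + β₁ ^ 2 * eunorm q ^ 2 + β₂ ^ 2 * eunorm r ^ 2)

section Norms

variable {I J α : Type*} [Fintype I] [Fintype J]

lemma eunorm_nonneg [SeminormedAddGroup α] (v : I → α) : 0 ≤ eunorm v :=
  Real.sqrt_nonneg _

lemma eunorm_sq [SeminormedAddGroup α] (v : I → α) : eunorm v ^ 2 = ∑ i, ‖v i‖ ^ 2 :=
  Real.sq_sqrt (by positivity)

lemma frob_sq [SeminormedAddGroup α] (A : Matrix I J α) :
    frob A ^ 2 = ∑ i, ∑ j, ‖A i j‖ ^ 2 :=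
  Real.sq_sqrt (by positivity)

lemma eunorm_sq_eq_dotProduct (v : I → ℝ) : eunorm v ^ 2 = v ⬝ᵥ v := by
  rw [eunorm_sq]
  simp [dotProduct, sq]

lemma eunorm_sumElim_sq [SeminormedAddGroup α] (f : I → α) (g : J → α) :
    eunorm (Sum.elim f g) ^ 2 = eunorm f ^ 2 + eunorm g ^ 2 := by
  simp [eunorm_sq, Fintype.sum_sum_type]

lemma eunorm_smul_sq (c : ℝ) (v : I → ℝ) : eunorm (c • v) ^ 2 = c ^ 2 * eunorm v ^ 2 := by
  simp [eunorm_sq, mul_pow, Finset.mul_sum]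

lemma frob_smul_sq (c : ℝ) (A : Matrix I J ℝ) : frob (c • A) ^ 2 = c ^ 2 * frob A ^ 2 := by
  simp [frob_sq, mul_pow, Finset.mul_sum]

lemma eunorm_vecM [SeminormedAddGroup α] (A : Matrix I J α) : eunorm (vecM A) = frob A := by
  rw [eunorm, frob, Fintype.sum_prod_type, Finset.sum_comm]
  rfl

end Norms

section LeastNorm

variable {ρ κ : Type*} [Fintype ρ] [Fintype κ] [DecidableEq ρ]

lemma isUnit_mul_transpose_of_injective (M : Matrix ρ κ ℝ) (hM : Function.Injective M.vecMul) :
    IsUnit (M * Mᵀ) := by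
  simpa [conjTranspose_eq_transpose_of_trivial] using (PosDef.mul_conjTranspose_self M hM).isUnit

variable {M : Matrix ρ κ ℝ} (hM : IsUnit (M * Mᵀ)) (w : ρ → ℝ)
include hM

lemma mulVec_leastNorm : M *ᵥ ((Mᵀ * (M * Mᵀ)⁻¹) *ᵥ w) = w := by
  rw [mulVec_mulVec, ← Matrix.mul_assoc,
    mul_nonsing_inv _ ((isUnit_iff_isUnit_det _).mp hM), one_mulVec]

lemma eunorm_leastNorm_le {x : κ → ℝ} (hx : M *ᵥ x = w) :
    eunorm ((Mᵀ * (M * Mᵀ)⁻¹) *ᵥ w) ≤ eunorm x := by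
  set xs := (Mᵀ * (M * Mᵀ)⁻¹) *ᵥ w
  have hxs : xs = ((M * Mᵀ)⁻¹ *ᵥ w) ᵥ* M := by
    rw [← mulVec_transpose, mulVec_mulVec]
  have horth : xs ⬝ᵥ (x - xs) = 0 := by
    rw [hxs, ← dotProduct_mulVec, mulVec_sub, hx, ← hxs, mulVec_leastNorm hM, sub_self,
      dotProduct_zero]
  have hpyth : eunorm x ^ 2 = eunorm xs ^ 2 + eunorm (x - xs) ^ 2 := by
    have hsplit : x = xs + (x - xs) := (add_sub_cancel xs x).symm
    simp only [eunorm_sq_eq_dotProduct]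
    conv_lhs => rw [hsplit]
    rw [add_dotProduct, dotProduct_add, dotProduct_add, dotProduct_comm (x - xs) xs, horth]
    ring
  exact pow_le_pow_iff_left₀ (eunorm_nonneg _) (eunorm_nonneg _) two_ne_zero |>.mp
    (by nlinarith [sq_nonneg (eunorm (x - xs))])

end LeastNorm

section Triangle

variable {k : ℕ} {β : Type*} [AddCommMonoid β]

lemma sum_subtype_eq_sum_ite {ι : Type*} [Fintype ι] (P : ι → Prop) [DecidablePred P]
    (g : ι → β) : ∑ x : Subtype P, g x = ∑ x, if P x then g x else 0 := by
  rw [← Finset.sum_subtype (Finset.univ.filter P) (by simp) g, Finset.sum_filter]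

lemma sum_symIdx (g : Fin k × Fin k → β) :
    ∑ p : SymIdx k, g p.1 = ∑ i, g (i, i) + ∑ p : SkewIdx k, g p.1 := by
  have hdiag : ∑ i, g (i, i) = ∑ p, if p.2 = p.1 then g p else 0 := by
    simp [Fintype.sum_prod_type]
  rw [sum_subtype_eq_sum_ite, sum_subtype_eq_sum_ite, hdiag, ← Finset.sum_add_distrib]
  refine Finset.sum_congr rfl fun p _ => ?_
  split_ifs <;> first | rfl | (exfalso; omega) | simp

lemma sum_prod_eq_diag_add_skewIdx (g : Fin k × Fin k → β) :
    ∑ p, g p = ∑ i, g (i, i) + ∑ p : SkewIdx k, (g p.1 + g p.1.swap) := by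
  have hswap : ∑ p : SkewIdx k, g p.1.swap = ∑ p, if p.1 < p.2 then g p else 0 := by
    rw [sum_subtype_eq_sum_ite (fun p : Fin k × Fin k => p.2 < p.1) (fun p => g p.swap)]
    exact Fintype.sum_equiv (Equiv.prodComm _ _) _ _ fun p => by
      simp only [Equiv.prodComm_apply, Prod.fst_swap, Prod.snd_swap]; congr
  rw [Finset.sum_add_distrib, ← add_assoc, ← sum_symIdx, hswap, sum_subtype_eq_sum_ite,
    ← Finset.sum_add_distrib]
  refine Finset.sum_congr rfl fun p _ => ?_
  split_ifs <;> first | rfl | (exfalso; omega) | simp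

end Triangle

section Vectorization

variable {k : ℕ}

lemma JS_mulVec_vecS {A : Matrix (Fin k) (Fin k) ℝ} (hA : Aᵀ = A) : JS k *ᵥ vecS A = vecM A := by
  funext ⟨j, i⟩
  have hji : A j i = A i j := congrFun (congrFun hA i) j
  -- each indicator of the rearranged summand selects a single index pair `(x, y)`
  have hterm : ∀ x y : Fin k, (if y ≤ x then ((if i = x ∧ j = y then (1 : ℝ) else 0) +
      (if x ≠ y ∧ i = y ∧ j = x then 1 else 0)) * A x y else 0) =
      (if i = x ∧ j = y then (if y ≤ x then A x y else 0) else 0) +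
      (if j = x ∧ i = y then (if y < x then A x y else 0) else 0) := by
    intro x y
    split_ifs <;> grind
  simp only [mulVec, dotProduct, JS, of_apply, vecS, vecM]
  rw [sum_subtype_eq_sum_ite (fun p : Fin k × Fin k => p.2 ≤ p.1)
    (fun p => ((if i = p.1 ∧ j = p.2 then (1 : ℝ) else 0) +
      (if p.1 ≠ p.2 ∧ i = p.2 ∧ j = p.1 then 1 else 0)) * A p.1 p.2), Fintype.sum_prod_type]
  simp only [hterm]
  simp only [ite_and, Finset.sum_add_distrib, Finset.sum_ite_irrel, Finset.sum_ite_eq,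
    Finset.mem_univ, if_true, Finset.sum_const_zero]
  split_ifs <;> grind

lemma JSK_mulVec_vecSK {A : Matrix (Fin k) (Fin k) ℝ} (hA : Aᵀ = -A) :
    JSK k *ᵥ vecSK A = vecM A := by
  funext ⟨j, i⟩
  have hji : A j i = -A i j := congrFun (congrFun hA i) j
  have hterm : ∀ x y : Fin k, (if y < x then ((if i = x ∧ j = y then (1 : ℝ) else 0) -
      (if i = y ∧ j = x then 1 else 0)) * A x y else 0) =
      (if i = x ∧ j = y then (if y < x then A x y else 0) else 0) -
      (if j = x ∧ i = y then (if y < x then A x y else 0) else 0) := by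
    intro x y
    split_ifs <;> grind
  simp only [mulVec, dotProduct, JSK, of_apply, vecSK, vecM]
  rw [sum_subtype_eq_sum_ite (fun p : Fin k × Fin k => p.2 < p.1)
    (fun p => ((if i = p.1 ∧ j = p.2 then (1 : ℝ) else 0) -
      (if i = p.2 ∧ j = p.1 then 1 else 0)) * A p.1 p.2), Fintype.sum_prod_type]
  simp only [hterm]
  simp only [ite_and, Finset.sum_sub_distrib, Finset.sum_ite_irrel, Finset.sum_ite_eq,
    Finset.mem_univ, if_true, Finset.sum_const_zero]
  split_ifs <;> grind

lemma rowKronId_mulVec_vecM {a b : ℕ} (u : Fin a → ℝ) (A : Matrix (Fin b) (Fin a) ℝ) :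
    rowKronId u *ᵥ vecM A = A *ᵥ u := by
  funext r
  simp [rowKronId, vecM, mulVec, dotProduct, Fintype.sum_prod_type, mul_comm]

lemma idKronRow_mulVec_vecM {a b : ℕ} (v : Fin b → ℝ) (A : Matrix (Fin b) (Fin a) ℝ) :
    idKronRow v *ᵥ vecM A = Aᵀ *ᵥ v := by
  funext r
  simp [idKronRow, vecM, mulVec, dotProduct, Fintype.sum_prod_type, mul_comm]

lemma exists_transpose_eq_vecS_eq (v : SymIdx k → ℝ) :
    ∃ A : Matrix (Fin k) (Fin k) ℝ, Aᵀ = A ∧ vecS A = v := by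
  refine ⟨of fun i j => if h : j ≤ i then v ⟨(i, j), h⟩ else v ⟨(j, i), (not_le.mp h).le⟩,
    ?_, funext fun p => by simp [vecS, p.2]⟩
  ext i j
  simp only [transpose_apply, of_apply]
  split_ifs <;> first | rfl | (exfalso; omega) | (obtain rfl : i = j := (by omega); rfl)

lemma exists_transpose_eq_neg_vecSK_eq (v : SkewIdx k → ℝ) :
    ∃ A : Matrix (Fin k) (Fin k) ℝ, Aᵀ = -A ∧ vecSK A = v := by
  refine ⟨of fun i j => if h : j < i then v ⟨(i, j), h⟩
    else if h' : i < j then -v ⟨(j, i), h'⟩ else 0, ?_, funext fun p => by simp [vecSK, p.2]⟩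
  ext i j
  simp only [transpose_apply, of_apply, Matrix.neg_apply]
  split_ifs <;> first | simp | (exfalso; omega)

variable {α : Type*} [Zero α]

lemma Phi_mulVec_vecS (X : Matrix (Fin k) (Fin k) α) (A : Matrix (Fin k) (Fin k) ℝ) :
    Phi X *ᵥ vecS A = vecS (A ⊙ thetaR X) := by
  funext p
  simp [Phi, mulVec_diagonal, vecS, mul_comm]

lemma Psi_mulVec_vecSK (X : Matrix (Fin k) (Fin k) α) (A : Matrix (Fin k) (Fin k) ℝ) :
    Psi X *ᵥ vecSK A = vecSK (A ⊙ thetaR X) := by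
  funext p
  simp [Psi, mulVec_diagonal, vecSK, mul_comm]

lemma Sig_mulVec_vecM {I J : Type*} [Fintype I] [Fintype J] [DecidableEq I] [DecidableEq J]
    (X : Matrix I J α) (A : Matrix I J ℝ) : Sig X *ᵥ vecM A = vecM (A ⊙ thetaR X) := by
  funext p
  simp [Sig, mulVec_diagonal, vecM, mul_comm]

lemma isUnit_DS : IsUnit (DS k) := by
  rw [isUnit_iff_isUnit_det, DS, det_diagonal, isUnit_iff_ne_zero]
  exact Finset.prod_ne_zero_iff.mpr fun p _ => by split_ifs <;> positivity

lemma isUnit_DSK : IsUnit (DSK k) := by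
  rw [isUnit_iff_isUnit_det, DSK, det_diagonal, isUnit_iff_ne_zero]
  exact Finset.prod_ne_zero_iff.mpr fun _ _ => by positivity

/-- `symFactor X` and `skewFactor X` are `N₁ = J_S Φ_X D_S⁻¹` and `N₂ = J_SK Ψ_X D_SK⁻¹` of the
theorem for `X = E`, and `S₁`, `S₂` for `X = G`. -/
def symFactor (X : Matrix (Fin k) (Fin k) α) : Matrix (Fin k × Fin k) (SymIdx k) ℝ :=
  JS k * Phi X * (DS k)⁻¹

def skewFactor (X : Matrix (Fin k) (Fin k) α) : Matrix (Fin k × Fin k) (SkewIdx k) ℝ :=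
  JSK k * Psi X * (DSK k)⁻¹

lemma symFactor_mulVec (X : Matrix (Fin k) (Fin k) α) {A : Matrix (Fin k) (Fin k) ℝ}
    (hA : (A ⊙ thetaR X)ᵀ = A ⊙ thetaR X) :
    symFactor X *ᵥ (DS k *ᵥ vecS A) = vecM (A ⊙ thetaR X) := by
  rw [symFactor, ← mulVec_mulVec, ← mulVec_mulVec, mulVec_mulVec _ (DS k)⁻¹,
    nonsing_inv_mul _ ((isUnit_iff_isUnit_det _).mp isUnit_DS), one_mulVec, Phi_mulVec_vecS,
    JS_mulVec_vecS hA]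

lemma skewFactor_mulVec (X : Matrix (Fin k) (Fin k) α) {A : Matrix (Fin k) (Fin k) ℝ}
    (hA : (A ⊙ thetaR X)ᵀ = -(A ⊙ thetaR X)) :
    skewFactor X *ᵥ (DSK k *ᵥ vecSK A) = vecM (A ⊙ thetaR X) := by
  rw [skewFactor, ← mulVec_mulVec, ← mulVec_mulVec, mulVec_mulVec _ (DSK k)⁻¹,
    nonsing_inv_mul _ ((isUnit_iff_isUnit_det _).mp isUnit_DSK), one_mulVec, Psi_mulVec_vecSK,
    JSK_mulVec_vecSK hA]

lemma thetaR_mul_self {I J : Type*} (X : Matrix I J α) (i : I) (j : J) :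
    thetaR X i j * thetaR X i j = thetaR X i j := by
  by_cases h : X i j = 0 <;> simp [thetaR, h]

lemma symFactor_mul_diagonal (X : Matrix (Fin k) (Fin k) α) :
    symFactor X * diagonal (vecS (thetaR X)) = symFactor X := by
  have hidem : Phi X * Phi X = Phi X := by
    rw [Phi, diagonal_mul_diagonal]
    exact congrArg diagonal (funext fun p => thetaR_mul_self X _ _)
  have hcomm : (DS k)⁻¹ * Phi X = Phi X * (DS k)⁻¹ := by
    simp only [DS, inv_diagonal, Phi, diagonal_mul_diagonal, mul_comm]
  change symFactor X * Phi X = _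
  rw [symFactor, Matrix.mul_assoc, hcomm, ← Matrix.mul_assoc, Matrix.mul_assoc (JS k), hidem]

lemma skewFactor_mul_diagonal (X : Matrix (Fin k) (Fin k) α) :
    skewFactor X * diagonal (vecSK (thetaR X)) = skewFactor X := by
  have hidem : Psi X * Psi X = Psi X := by
    rw [Psi, diagonal_mul_diagonal]
    exact congrArg diagonal (funext fun p => thetaR_mul_self X _ _)
  have hcomm : (DSK k)⁻¹ * Psi X = Psi X * (DSK k)⁻¹ := by
    simp only [DSK, inv_diagonal, Psi, diagonal_mul_diagonal, mul_comm]
  change skewFactor X * Psi X = _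
  rw [skewFactor, Matrix.mul_assoc, hcomm, ← Matrix.mul_assoc, Matrix.mul_assoc (JSK k), hidem]

lemma Sig_mul_diagonal {I J : Type*} [Fintype I] [Fintype J] [DecidableEq I] [DecidableEq J]
    (X : Matrix I J α) : Sig X * diagonal (vecM (thetaR X)) = Sig X := by
  rw [Sig, diagonal_mul_diagonal]
  congr 1
  funext p
  exact thetaR_mul_self X _ _

lemma eunorm_DS_mulVec_vecS {A : Matrix (Fin k) (Fin k) ℝ} (hA : Aᵀ = A) :
    eunorm (DS k *ᵥ vecS A) = frob A := by
  rw [eunorm, frob, ← Fintype.sum_prod_type']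
  congr 1
  simp only [DS, mulVec_diagonal, vecS]
  rw [sum_symIdx fun q => ‖(if q.1 = q.2 then 1 else √2) * A q.1 q.2‖ ^ 2,
    sum_prod_eq_diag_add_skewIdx]
  refine congrArg₂ (· + ·) (by simp) (Finset.sum_congr rfl fun p _ => ?_)
  have hswap : A p.1.2 p.1.1 = A p.1.1 p.1.2 := congrFun (congrFun hA _) _
  simp only [p.2.ne', if_false, norm_mul, Real.norm_eq_abs, mul_pow, sq_abs, Nat.ofNat_nonneg,
    Real.sq_sqrt, Prod.fst_swap, Prod.snd_swap, hswap]
  ring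

lemma eunorm_DSK_mulVec_vecSK {A : Matrix (Fin k) (Fin k) ℝ} (hA : Aᵀ = -A) :
    eunorm (DSK k *ᵥ vecSK A) = frob A := by
  rw [eunorm, frob, ← Fintype.sum_prod_type']
  congr 1
  have hdiag : ∀ i, A i i = 0 := fun i => by
    have := congrFun (congrFun hA i) i
    simp only [transpose_apply, Matrix.neg_apply] at this
    linarith
  simp only [DSK, mulVec_diagonal, vecSK]
  rw [sum_prod_eq_diag_add_skewIdx]
  refine (zero_add _).symm.trans
    (congrArg₂ (· + ·) (by simp [hdiag]) (Finset.sum_congr rfl fun p _ => ?_))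
  have hswap : A p.1.2 p.1.1 = -A p.1.1 p.1.2 := congrFun (congrFun hA _) _
  simp only [norm_mul, Real.norm_eq_abs, mul_pow, sq_abs, Nat.ofNat_nonneg, Real.sq_sqrt,
    Prod.fst_swap, Prod.snd_swap, hswap, norm_neg]
  ring

end Vectorization

section ReIm

variable {I J : Type*}

def splitReIm (v : I → ℂ) : I ⊕ I → ℝ := Sum.elim (reV v) (imV v)

lemma splitReIm_injective : Function.Injective (splitReIm (I := I)) := fun _ _ h =>
  funext fun i => Complex.ext (congrFun h (Sum.inl i)) (congrFun h (Sum.inr i))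

lemma splitReIm_add (v w : I → ℂ) : splitReIm (v + w) = splitReIm v + splitReIm w := by
  ext (i | i) <;> simp [splitReIm, reV, imV]

lemma splitReIm_sub (v w : I → ℂ) : splitReIm (v - w) = splitReIm v - splitReIm w := by
  ext (i | i) <;> simp [splitReIm, reV, imV]

lemma eunorm_splitReIm [Fintype I] (v : I → ℂ) : eunorm (splitReIm v) = eunorm v := by
  rw [eunorm, eunorm, Fintype.sum_sum_type, ← Finset.sum_add_distrib]
  congr 1
  refine Finset.sum_congr rfl fun i _ => ?_
  simp only [splitReIm, Sum.elim_inl, Sum.elim_inr, reV, imV, Real.norm_eq_abs, sq_abs,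
    Complex.sq_norm, Complex.normSq_apply]
  ring

lemma frob_sq_eq_reM_imM [Fintype I] [Fintype J] (D : Matrix I J ℂ) :
    frob D ^ 2 = frob (reM D) ^ 2 + frob (imM D) ^ 2 := by
  rw [frob_sq, frob_sq, frob_sq, ← Finset.sum_add_distrib]
  refine Finset.sum_congr rfl fun i _ => ?_
  rw [← Finset.sum_add_distrib]
  refine Finset.sum_congr rfl fun j _ => ?_
  simp only [reM, imM, map_apply, Real.norm_eq_abs, sq_abs, Complex.sq_norm, Complex.normSq_apply]
  ring

lemma reV_mulVec [Fintype J] (A : Matrix I J ℂ) (v : J → ℂ) :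
    reV (A *ᵥ v) = reM A *ᵥ reV v - imM A *ᵥ imV v := by
  funext i
  simp only [reV, imV, reM, imM, mulVec, dotProduct, Pi.sub_apply, map_apply, Complex.re_sum,
    Complex.mul_re, Finset.sum_sub_distrib]

lemma imV_mulVec [Fintype J] (A : Matrix I J ℂ) (v : J → ℂ) :
    imV (A *ᵥ v) = reM A *ᵥ imV v + imM A *ᵥ reV v := by
  funext i
  simp only [reV, imV, reM, imM, mulVec, dotProduct, Pi.add_apply, map_apply, Complex.im_sum,
    Complex.mul_im, Finset.sum_add_distrib]

lemma reM_conjTranspose (A : Matrix I J ℂ) : reM Aᴴ = (reM A)ᵀ := by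
  ext; simp [reM]

lemma imM_conjTranspose (A : Matrix I J ℂ) : imM Aᴴ = -(imM A)ᵀ := by
  ext; simp [imM]

lemma reM_hadamard_theta (D X : Matrix I J ℂ) : reM (D ⊙ theta X) = reM D ⊙ thetaR X := by
  ext i j; by_cases h : X i j = 0 <;> simp [reM, theta, thetaR, h]

lemma imM_hadamard_theta (D X : Matrix I J ℂ) : imM (D ⊙ theta X) = imM D ⊙ thetaR X := by
  ext i j; by_cases h : X i j = 0 <;> simp [imM, theta, thetaR, h]

lemma isHermitian_iff_reM_imM {D : Matrix I I ℂ} :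
    D.IsHermitian ↔ (reM D)ᵀ = reM D ∧ (imM D)ᵀ = -imM D := by
  simp only [IsHermitian, ← ext_iff, conjTranspose_apply, transpose_apply, reM, imM, map_apply,
    Matrix.neg_apply, Complex.ext_iff, Complex.star_def, Complex.conj_re, Complex.conj_im]
  exact ⟨fun h => ⟨fun i j => (h i j).1, fun i j => by linarith [(h i j).2]⟩,
    fun h i j => ⟨h.1 i j, by linarith [h.2 i j]⟩⟩

lemma conjTranspose_theta {X : Matrix I I ℂ} (hX : X.IsHermitian) : (theta X)ᴴ = theta X := by
  ext i j
  simp [theta, ← hX.apply i j]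

lemma isHermitian_hadamard_theta {X D : Matrix I I ℂ} (hX : X.IsHermitian) (hD : D.IsHermitian) :
    (D ⊙ theta X).IsHermitian := by
  rw [IsHermitian, conjTranspose_hadamard, conjTranspose_theta hX, hD.eq, hadamard_comm]

lemma exists_reM_imM_eq (A B : Matrix I J ℝ) : ∃ D : Matrix I J ℂ, reM D = A ∧ imM D = B :=
  ⟨of fun i j => ⟨A i j, B i j⟩, rfl, rfl⟩

lemma exists_smul_splitReIm_eq {c : ℝ} (hc : c ≠ 0) (v : I ⊕ I → ℝ) :
    ∃ z : I → ℂ, c • splitReIm z = v :=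
  ⟨fun i => ⟨c⁻¹ * v (Sum.inl i), c⁻¹ * v (Sum.inr i)⟩, by
    ext (i | i) <;> simp [splitReIm, reV, imV, hc]⟩

lemma exists_vecM_smul_reM_imM_eq {c : ℝ} (hc : c ≠ 0) (v₁ v₂ : J × I → ℝ) :
    ∃ D : Matrix I J ℂ, vecM (c • reM D) = v₁ ∧ vecM (c • imM D) = v₂ :=
  ⟨of fun i j => ⟨c⁻¹ * v₁ (j, i), c⁻¹ * v₂ (j, i)⟩, by
    constructor <;> ext ⟨j, i⟩ <;> simp [vecM, reM, imM, hc]⟩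

end ReIm

lemma exists_isHermitian_coords {k : ℕ} {c : ℝ} (hc : c ≠ 0) (v₁ : SymIdx k → ℝ)
    (v₂ : SkewIdx k → ℝ) : ∃ D : Matrix (Fin k) (Fin k) ℂ, D.IsHermitian ∧
      DS k *ᵥ vecS (c • reM D) = v₁ ∧ DSK k *ᵥ vecSK (c • imM D) = v₂ := by
  obtain ⟨A, hA, hAv⟩ := exists_transpose_eq_vecS_eq ((DS k)⁻¹ *ᵥ v₁)
  obtain ⟨B, hB, hBv⟩ := exists_transpose_eq_neg_vecSK_eq ((DSK k)⁻¹ *ᵥ v₂)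
  obtain ⟨D, hDA, hDB⟩ := exists_reM_imM_eq (c⁻¹ • A) (c⁻¹ • B)
  refine ⟨D, isHermitian_iff_reM_imM.mpr ⟨?_, ?_⟩, ?_, ?_⟩
  · rw [hDA, transpose_smul, hA]
  · rw [hDB, transpose_smul, hB, smul_neg]
  · rw [hDA, smul_smul, mul_inv_cancel₀ hc, one_smul, hAv, mulVec_mulVec,
      mul_nonsing_inv _ ((isUnit_iff_isUnit_det _).mp isUnit_DS), one_mulVec]
  · rw [hDB, smul_smul, mul_inv_cancel₀ hc, one_smul, hBv, mulVec_mulVec,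
      mul_nonsing_inv _ ((isUnit_iff_isUnit_det _).mp isUnit_DSK), one_mulVec]

lemma diagonal_mulVec_eq_mul {I : Type*} [Fintype I] [DecidableEq I] (d v : I → ℝ) :
    diagonal d *ᵥ v = d * v :=
  funext fun i => mulVec_diagonal d v i

lemma add_sub_eq_sub_sub_iff {V : Type*} [AddCommGroup V] (x x' y y' q d : V) :
    x' + y' - d = q - x - y ↔ x + x' + (y + y') = q + d := by
  rw [← sub_eq_zero, ← sub_eq_zero (a := x + x' + (y + y')),
    show x' + y' - d - (q - x - y) = x + x' + (y + y') - (q + d) by abel]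

section BackwardErrorMatrix

variable {n m : ℕ}

abbrev PatIdx (n m : ℕ) :=
  ((SymIdx n ⊕ SkewIdx n) ⊕ ((Fin n × Fin m) ⊕ (Fin n × Fin m))) ⊕
    (((Fin n × Fin m) ⊕ (Fin n × Fin m)) ⊕ (SymIdx m ⊕ SkewIdx m))

abbrev RowIdx (n m : ℕ) := (Fin n ⊕ Fin n) ⊕ (Fin m ⊕ Fin m)

variable (E : Matrix (Fin n) (Fin n) ℂ) (F H : Matrix (Fin m) (Fin n) ℂ)
  (G : Matrix (Fin m) (Fin m) ℂ) (uh : Fin n → ℂ) (ph : Fin m → ℂ) (α₁ α₂ α₃ α₄ β₁ β₂ : ℝ)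

/-- The matrix `M` of the theorem. The named arguments `(b := n)`, `(a := n)`, ... make `*`
elaborate as `Matrix` multiplication instead of `CStarMatrix` multiplication. -/
def beMatrix : Matrix (RowIdx n m) (PatIdx n m ⊕ RowIdx n m) ℝ :=
  fromBlocks
    (fromCols
      (fromRows
        (fromCols
          (fromCols (α₁⁻¹ • (rowKronId (b := n) (reV uh) * symFactor E))
            ((-(α₁⁻¹)) • (rowKronId (b := n) (imV uh) * skewFactor E)))
          (fromCols (α₂⁻¹ • (idKronRow (a := n) (reV ph) * Sig F))
            (α₂⁻¹ • (idKronRow (a := n) (imV ph) * Sig F))))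
        (fromCols
          (fromCols (α₁⁻¹ • (rowKronId (b := n) (imV uh) * symFactor E))
            (α₁⁻¹ • (rowKronId (b := n) (reV uh) * skewFactor E)))
          (fromCols (α₂⁻¹ • (idKronRow (a := n) (imV ph) * Sig F))
            ((-(α₂⁻¹)) • (idKronRow (a := n) (reV ph) * Sig F)))))
      0)
    (fromCols ((-(β₁⁻¹)) • 1) 0)
    (fromCols 0
      (fromRows
        (fromCols
          (fromCols (α₃⁻¹ • (rowKronId (b := m) (reV uh) * Sig H))
            ((-(α₃⁻¹)) • (rowKronId (b := m) (imV uh) * Sig H)))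
          (fromCols (α₄⁻¹ • (rowKronId (b := m) (reV ph) * symFactor G))
            ((-(α₄⁻¹)) • (rowKronId (b := m) (imV ph) * skewFactor G))))
        (fromCols
          (fromCols (α₃⁻¹ • (rowKronId (b := m) (imV uh) * Sig H))
            (α₃⁻¹ • (rowKronId (b := m) (reV uh) * Sig H)))
          (fromCols (α₄⁻¹ • (rowKronId (b := m) (imV ph) * symFactor G))
            (α₄⁻¹ • (rowKronId (b := m) (reV ph) * skewFactor G))))))
    (fromCols 0 ((-(β₂⁻¹)) • 1))

lemma beMatrix_isUnit (hβ₁ : β₁ ≠ 0) (hβ₂ : β₂ ≠ 0) :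
    IsUnit (beMatrix E F H G uh ph α₁ α₂ α₃ α₄ β₁ β₂ *
      (beMatrix E F H G uh ph α₁ α₂ α₃ α₄ β₁ β₂)ᵀ) := by
  refine isUnit_mul_transpose_of_injective _ fun v w hvw => ?_
  have hres : ∀ v : RowIdx n m → ℝ, (v ᵥ* beMatrix E F H G uh ph α₁ α₂ α₃ α₄ β₁ β₂) ∘ Sum.inr =
      Sum.elim ((-β₁⁻¹) • (v ∘ Sum.inl)) ((-β₂⁻¹) • (v ∘ Sum.inr)) := fun v => by
    ext (i | i) <;> simp [beMatrix, vecMul_fromBlocks, vecMul_neg, vecMul_smul]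
  have h := congrArg (· ∘ Sum.inr) hvw
  simp only [hres] at h
  ext (i | i)
  · simpa [hβ₁] using congrFun h (Sum.inl i)
  · simpa [hβ₂] using congrFun h (Sum.inr i)

/-- Real coordinates of a perturbation, ordered as the columns of `beMatrix`. The Hermitian
blocks are stored through the lower triangles of their real and imaginary parts, weighted by `D_S`
and `D_SK` so that off-diagonal entries count twice, as in the Frobenius norm. -/
def perturbationCoords (ΔE : Matrix (Fin n) (Fin n) ℂ) (ΔF ΔH : Matrix (Fin m) (Fin n) ℂ)
    (ΔG : Matrix (Fin m) (Fin m) ℂ) (dq : Fin n → ℂ) (dr : Fin m → ℂ) :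
    PatIdx n m ⊕ RowIdx n m → ℝ :=
  Sum.elim
    (Sum.elim
      (Sum.elim
        (Sum.elim (DS n *ᵥ vecS (α₁ • reM ΔE)) (DSK n *ᵥ vecSK (α₁ • imM ΔE)))
        (Sum.elim (vecM (α₂ • reM ΔF)) (vecM (α₂ • imM ΔF))))
      (Sum.elim
        (Sum.elim (vecM (α₃ • reM ΔH)) (vecM (α₃ • imM ΔH)))
        (Sum.elim (DS m *ᵥ vecS (α₄ • reM ΔG)) (DSK m *ᵥ vecSK (α₄ • imM ΔG)))))
    (Sum.elim (β₁ • splitReIm dq) (β₂ • splitReIm dr))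

/-- The sparsity pattern of `E, F, H, G` on the coordinates of `perturbationCoords`. -/
def patternMask : PatIdx n m ⊕ RowIdx n m → ℝ :=
  Sum.elim
    (Sum.elim
      (Sum.elim (Sum.elim (vecS (thetaR E)) (vecSK (thetaR E)))
        (Sum.elim (vecM (thetaR F)) (vecM (thetaR F))))
      (Sum.elim (Sum.elim (vecM (thetaR H)) (vecM (thetaR H)))
        (Sum.elim (vecS (thetaR G)) (vecSK (thetaR G)))))
    1

lemma perturbationCoords_hadamard_theta (ΔE : Matrix (Fin n) (Fin n) ℂ)
    (ΔF ΔH : Matrix (Fin m) (Fin n) ℂ) (ΔG : Matrix (Fin m) (Fin m) ℂ) (dq : Fin n → ℂ)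
    (dr : Fin m → ℂ) :
    perturbationCoords α₁ α₂ α₃ α₄ β₁ β₂ (ΔE ⊙ theta E) (ΔF ⊙ theta F) (ΔH ⊙ theta H)
        (ΔG ⊙ theta G) dq dr =
      patternMask E F H G * perturbationCoords α₁ α₂ α₃ α₄ β₁ β₂ ΔE ΔF ΔH ΔG dq dr := by
  ext ((((p | p) | (p | p)) | ((p | p) | (p | p))) | ((i | i) | (i | i))) <;>
    simp only [perturbationCoords, patternMask, DS, DSK, reM_hadamard_theta, imM_hadamard_theta,
      diagonal_const_mulVec, mulVec_diagonal, Sum.elim_inl, Sum.elim_inr, vecS, vecSK, vecM,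
      Matrix.smul_apply, hadamard_apply, smul_eq_mul, ite_mul, mul_ite, one_mul, Pi.smul_apply,
      Pi.mul_apply, Pi.one_apply] <;>
    first | (split_ifs <;> ring) | ring

lemma beMatrix_mul_diagonal_patternMask :
    beMatrix E F H G uh ph α₁ α₂ α₃ α₄ β₁ β₂ * diagonal (patternMask E F H G) =
      beMatrix E F H G uh ph α₁ α₂ α₃ α₄ β₁ β₂ := by
  have hone : diagonal (1 : RowIdx n m → ℝ) = 1 := diagonal_one
  simp only [beMatrix, patternMask, ← fromBlocks_diagonal, hone, fromBlocks_multiply,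
    fromCols_mul_fromBlocks, fromRows_mul, smul_mul, Matrix.mul_assoc, symFactor_mul_diagonal,
    skewFactor_mul_diagonal, Sig_mul_diagonal, Matrix.zero_mul, Matrix.mul_zero, Matrix.mul_one,
    add_zero, zero_add]

variable {α₁ α₂ α₃ α₄ β₁ β₂} in
lemma zeta2_eq_eunorm_perturbationCoords {ΔE : Matrix (Fin n) (Fin n) ℂ}
    {ΔF ΔH : Matrix (Fin m) (Fin n) ℂ} {ΔG : Matrix (Fin m) (Fin m) ℂ} {dq : Fin n → ℂ}
    {dr : Fin m → ℂ} (hΔE : ΔE.IsHermitian) (hΔG : ΔG.IsHermitian) :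
    zeta2 α₁ α₂ α₃ α₄ β₁ β₂ ΔE ΔF ΔH ΔG dq dr =
      eunorm (perturbationCoords α₁ α₂ α₃ α₄ β₁ β₂ ΔE ΔF ΔH ΔG dq dr) := by
  obtain ⟨hE₁, hE₂⟩ := isHermitian_iff_reM_imM.mp hΔE
  obtain ⟨hG₁, hG₂⟩ := isHermitian_iff_reM_imM.mp hΔG
  refine (sq_eq_sq₀ (by rw [zeta2]; positivity) (eunorm_nonneg _)).mp ?_
  rw [zeta2, Real.sq_sqrt (by positivity)]
  simp only [perturbationCoords, eunorm_sumElim_sq, eunorm_smul_sq, eunorm_splitReIm, eunorm_vecM,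
    eunorm_DS_mulVec_vecS (A := α₁ • reM ΔE) (by rw [transpose_smul, hE₁]),
    eunorm_DSK_mulVec_vecSK (A := α₁ • imM ΔE) (by rw [transpose_smul, hE₂, smul_neg]),
    eunorm_DS_mulVec_vecS (A := α₄ • reM ΔG) (by rw [transpose_smul, hG₁]),
    eunorm_DSK_mulVec_vecSK (A := α₄ • imM ΔG) (by rw [transpose_smul, hG₂, smul_neg]),
    frob_smul_sq, frob_sq_eq_reM_imM]
  ring

variable {α₁ α₂ α₃ α₄ β₁ β₂} in
lemma exists_perturbationCoords_eq (hα₁ : α₁ ≠ 0) (hα₂ : α₂ ≠ 0) (hα₃ : α₃ ≠ 0) (hα₄ : α₄ ≠ 0)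
    (hβ₁ : β₁ ≠ 0) (hβ₂ : β₂ ≠ 0) (x : PatIdx n m ⊕ RowIdx n m → ℝ) :
    ∃ (ΔE : Matrix (Fin n) (Fin n) ℂ) (ΔF ΔH : Matrix (Fin m) (Fin n) ℂ)
      (ΔG : Matrix (Fin m) (Fin m) ℂ) (dq : Fin n → ℂ) (dr : Fin m → ℂ),
      ΔE.IsHermitian ∧ ΔG.IsHermitian ∧
        perturbationCoords α₁ α₂ α₃ α₄ β₁ β₂ ΔE ΔF ΔH ΔG dq dr = x := by
  obtain ⟨ΔE, hΔE, hE₁, hE₂⟩ := exists_isHermitian_coords hα₁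
    (fun p => x (.inl (.inl (.inl (.inl p))))) (fun p => x (.inl (.inl (.inl (.inr p)))))
  obtain ⟨ΔF, hF₁, hF₂⟩ := exists_vecM_smul_reM_imM_eq hα₂
    (fun p => x (.inl (.inl (.inr (.inl p))))) (fun p => x (.inl (.inl (.inr (.inr p)))))
  obtain ⟨ΔH, hH₁, hH₂⟩ := exists_vecM_smul_reM_imM_eq hα₃
    (fun p => x (.inl (.inr (.inl (.inl p))))) (fun p => x (.inl (.inr (.inl (.inr p)))))
  obtain ⟨ΔG, hΔG, hG₁, hG₂⟩ := exists_isHermitian_coords hα₄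
    (fun p => x (.inl (.inr (.inr (.inl p))))) (fun p => x (.inl (.inr (.inr (.inr p)))))
  obtain ⟨dq, hq⟩ := exists_smul_splitReIm_eq hβ₁ fun i => x (.inr (.inl i))
  obtain ⟨dr, hr⟩ := exists_smul_splitReIm_eq hβ₂ fun i => x (.inr (.inr i))
  refine ⟨ΔE, ΔF, ΔH, ΔG, dq, dr, hΔE, hΔG, ?_⟩
  ext ((((p | p) | (p | p)) | ((p | p) | (p | p))) | (i | i)) <;>
    simp only [perturbationCoords, Sum.elim_inl, Sum.elim_inr, hE₁, hE₂, hF₁, hF₂, hH₁, hH₂, hG₁,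
      hG₂, hq, hr]

variable {α₁ α₂ α₃ α₄ β₁ β₂} in
lemma exists_perturbationCoords_hadamard_eq (hα₁ : α₁ ≠ 0) (hα₂ : α₂ ≠ 0) (hα₃ : α₃ ≠ 0)
    (hα₄ : α₄ ≠ 0) (hβ₁ : β₁ ≠ 0) (hβ₂ : β₂ ≠ 0) {x : PatIdx n m ⊕ RowIdx n m → ℝ}
    (hx : patternMask E F H G * x = x) :
    ∃ (ΔE : Matrix (Fin n) (Fin n) ℂ) (ΔF ΔH : Matrix (Fin m) (Fin n) ℂ)
      (ΔG : Matrix (Fin m) (Fin m) ℂ) (dq : Fin n → ℂ) (dr : Fin m → ℂ),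
      ΔE.IsHermitian ∧ ΔG.IsHermitian ∧ perturbationCoords α₁ α₂ α₃ α₄ β₁ β₂
        (ΔE ⊙ theta E) (ΔF ⊙ theta F) (ΔH ⊙ theta H) (ΔG ⊙ theta G) dq dr = x := by
  obtain ⟨ΔE, ΔF, ΔH, ΔG, dq, dr, hΔE, hΔG, hcoords⟩ :=
    exists_perturbationCoords_eq hα₁ hα₂ hα₃ hα₄ hβ₁ hβ₂ x
  exact ⟨ΔE, ΔF, ΔH, ΔG, dq, dr, hΔE, hΔG, by rw [perturbationCoords_hadamard_theta, hcoords, hx]⟩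

lemma beMatrix_mulVec_mask (v : PatIdx n m ⊕ RowIdx n m → ℝ) :
    beMatrix E F H G uh ph α₁ α₂ α₃ α₄ β₁ β₂ *ᵥ (patternMask E F H G * v) =
      beMatrix E F H G uh ph α₁ α₂ α₃ α₄ β₁ β₂ *ᵥ v := by
  rw [← diagonal_mulVec_eq_mul, mulVec_mulVec, beMatrix_mul_diagonal_patternMask]

lemma patternMask_mul_transpose_mulVec (y : RowIdx n m → ℝ) :
    patternMask E F H G * ((beMatrix E F H G uh ph α₁ α₂ α₃ α₄ β₁ β₂)ᵀ *ᵥ y) =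
      (beMatrix E F H G uh ph α₁ α₂ α₃ α₄ β₁ β₂)ᵀ *ᵥ y := by
  rw [← diagonal_mulVec_eq_mul, mulVec_mulVec, ← diagonal_transpose, ← transpose_mul,
    beMatrix_mul_diagonal_patternMask]

end BackwardErrorMatrix

section Reduction

variable {n m : ℕ} {E : Matrix (Fin n) (Fin n) ℂ} (F H : Matrix (Fin m) (Fin n) ℂ)
  {G : Matrix (Fin m) (Fin m) ℂ} (uh : Fin n → ℂ) (ph : Fin m → ℂ) {α₁ α₂ α₃ α₄ β₁ β₂ : ℝ}
  (hE : E.IsHermitian) (hG : G.IsHermitian) (hα₁ : α₁ ≠ 0) (hα₂ : α₂ ≠ 0) (hα₃ : α₃ ≠ 0)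
  (hα₄ : α₄ ≠ 0) (hβ₁ : β₁ ≠ 0) (hβ₂ : β₂ ≠ 0)
include hE hG hα₁ hα₂ hα₃ hα₄ hβ₁ hβ₂

lemma beMatrix_mulVec_perturbationCoords {ΔE : Matrix (Fin n) (Fin n) ℂ}
    (ΔF ΔH : Matrix (Fin m) (Fin n) ℂ) {ΔG : Matrix (Fin m) (Fin m) ℂ} (dq : Fin n → ℂ)
    (dr : Fin m → ℂ) (hΔE : ΔE.IsHermitian) (hΔG : ΔG.IsHermitian) :
    beMatrix E F H G uh ph α₁ α₂ α₃ α₄ β₁ β₂ *ᵥ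
        perturbationCoords α₁ α₂ α₃ α₄ β₁ β₂ ΔE ΔF ΔH ΔG dq dr =
      Sum.elim (splitReIm ((ΔE ⊙ theta E) *ᵥ uh + (ΔF ⊙ theta F)ᴴ *ᵥ ph - dq))
        (splitReIm ((ΔH ⊙ theta H) *ᵥ uh + (ΔG ⊙ theta G) *ᵥ ph - dr)) := by
  obtain ⟨hE₁, hE₂⟩ := isHermitian_iff_reM_imM.mp (isHermitian_hadamard_theta hE hΔE)
  obtain ⟨hG₁, hG₂⟩ := isHermitian_iff_reM_imM.mp (isHermitian_hadamard_theta hG hΔG)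
  have hsE := symFactor_mulVec E (A := α₁ • reM ΔE)
    (by rw [smul_hadamard, ← reM_hadamard_theta, transpose_smul, hE₁])
  have hkE := skewFactor_mulVec E (A := α₁ • imM ΔE)
    (by rw [smul_hadamard, ← imM_hadamard_theta, transpose_smul, hE₂, smul_neg])
  have hsG := symFactor_mulVec G (A := α₄ • reM ΔG)
    (by rw [smul_hadamard, ← reM_hadamard_theta, transpose_smul, hG₁])
  have hkG := skewFactor_mulVec G (A := α₄ • imM ΔG)
    (by rw [smul_hadamard, ← imM_hadamard_theta, transpose_smul, hG₂, smul_neg])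
  simp only [beMatrix, perturbationCoords, fromBlocks_mulVec, fromCols_mulVec, fromRows_mulVec,
    Sum.elim_comp_inl, Sum.elim_comp_inr, smul_mulVec, ← mulVec_mulVec, hsE, hkE, hsG, hkG,
    Sig_mulVec_vecM, rowKronId_mulVec_vecM, idKronRow_mulVec_vecM, zero_mulVec, smul_hadamard,
    transpose_smul, smul_smul, inv_mul_cancel₀ hα₁, inv_mul_cancel₀ hα₂,
    inv_mul_cancel₀ hα₃, inv_mul_cancel₀ hα₄, neg_smul,
    one_smul, one_mulVec, mulVec_smul, neg_mulVec, add_zero, zero_add, splitReIm_add,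
    splitReIm_sub]
  ext ((i | i) | (i | i)) <;>
    simp only [splitReIm, Sum.elim_inl, Sum.elim_inr, Pi.add_apply, Pi.sub_apply, Pi.neg_apply,
      smul_neg, smul_inv_smul₀ hβ₁, smul_inv_smul₀ hβ₂, smul_zero, add_zero, zero_add, reV_mulVec,
      imV_mulVec, reM_hadamard_theta, imM_hadamard_theta, reM_conjTranspose, imM_conjTranspose,
      neg_mulVec, sub_neg_eq_add] <;>
    ring

lemma beMatrix_mulVec_eq_iff_perturbed_eq (q : Fin n → ℂ) (r : Fin m → ℂ)
    (ΔE : Matrix (Fin n) (Fin n) ℂ) (ΔF ΔH : Matrix (Fin m) (Fin n) ℂ)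
    (ΔG : Matrix (Fin m) (Fin m) ℂ) (dq : Fin n → ℂ) (dr : Fin m → ℂ)
    (hΔE : ΔE.IsHermitian) (hΔG : ΔG.IsHermitian) :
    beMatrix E F H G uh ph α₁ α₂ α₃ α₄ β₁ β₂ *ᵥ perturbationCoords α₁ α₂ α₃ α₄ β₁ β₂
        (ΔE ⊙ theta E) (ΔF ⊙ theta F) (ΔH ⊙ theta H) (ΔG ⊙ theta G) dq dr =
      Sum.elim (splitReIm (q - E *ᵥ uh - Fᴴ *ᵥ ph)) (splitReIm (r - H *ᵥ uh - G *ᵥ ph)) ↔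
    (E + ΔE ⊙ theta E) *ᵥ uh + (F + ΔF ⊙ theta F)ᴴ *ᵥ ph = q + dq ∧
      (H + ΔH ⊙ theta H) *ᵥ uh + (G + ΔG ⊙ theta G) *ᵥ ph = r + dr := by
  rw [perturbationCoords_hadamard_theta, beMatrix_mulVec_mask,
    beMatrix_mulVec_perturbationCoords F H uh ph hE hG hα₁ hα₂ hα₃ hα₄ hβ₁ hβ₂ ΔF ΔH dq dr hΔE hΔG,
    Sum.elim_eq_iff, splitReIm_injective.eq_iff, splitReIm_injective.eq_iff, add_sub_eq_sub_sub_iff,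
    add_sub_eq_sub_sub_iff, conjTranspose_add, add_mulVec, add_mulVec, add_mulVec, add_mulVec]

end Reduction

/-- Theorem 3.7, case (iii): sparsity-preserving structured backward error for
the GSPP with `E` Hermitian, `F ≠ H` general, `G` Hermitian. -/
theorem structured_BE_case_iii
    (n m : ℕ) (E : Matrix (Fin n) (Fin n) ℂ) (hE : E.IsHermitian)
    (F H : Matrix (Fin m) (Fin n) ℂ) (G : Matrix (Fin m) (Fin m) ℂ) (hG : G.IsHermitian)
    (q : Fin n → ℂ) (r : Fin m → ℂ) (uh : Fin n → ℂ) (ph : Fin m → ℂ)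
    (α₁ α₂ α₃ α₄ β₁ β₂ : ℝ)
    (hα₁ : 0 < α₁) (hα₂ : 0 < α₂) (hα₃ : 0 < α₃) (hα₄ : 0 < α₄)
    (hβ₁ : 0 < β₁) (hβ₂ : 0 < β₂) :
    let Q : Fin n → ℂ := q - E *ᵥ uh - Fᴴ *ᵥ ph
    let R : Fin m → ℂ := r - H *ᵥ uh - G *ᵥ ph
    let N₁ := JS n * Phi E * (DS n)⁻¹
    let N₂ := JSK n * Psi E * (DSK n)⁻¹
    let S₁ := JS m * Phi G * (DS m)⁻¹
    let S₂ := JSK m * Psi G * (DSK m)⁻¹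
    let M₁ : Matrix (Fin n ⊕ Fin n)
        (((SymIdx n ⊕ SkewIdx n) ⊕ ((Fin n × Fin m) ⊕ (Fin n × Fin m))) ⊕
          (((Fin n × Fin m) ⊕ (Fin n × Fin m)) ⊕ (SymIdx m ⊕ SkewIdx m))) ℝ :=
      fromCols
        (fromRows
          (fromCols
            (fromCols (α₁⁻¹ • (rowKronId (reV uh) * N₁))
              ((-(α₁⁻¹)) • (rowKronId (imV uh) * N₂)))
            (fromCols (α₂⁻¹ • (idKronRow (reV ph) * Sig F))
              (α₂⁻¹ • (idKronRow (imV ph) * Sig F))))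
          (fromCols
            (fromCols (α₁⁻¹ • (rowKronId (imV uh) * N₁))
              (α₁⁻¹ • (rowKronId (reV uh) * N₂)))
            (fromCols (α₂⁻¹ • (idKronRow (imV ph) * Sig F))
              ((-(α₂⁻¹)) • (idKronRow (reV ph) * Sig F)))))
        0
    let M₂ : Matrix (Fin m ⊕ Fin m)
        (((SymIdx n ⊕ SkewIdx n) ⊕ ((Fin n × Fin m) ⊕ (Fin n × Fin m))) ⊕
          (((Fin n × Fin m) ⊕ (Fin n × Fin m)) ⊕ (SymIdx m ⊕ SkewIdx m))) ℝ :=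
      fromCols 0
        (fromRows
          (fromCols
            (fromCols (α₃⁻¹ • (rowKronId (reV uh) * Sig H))
              ((-(α₃⁻¹)) • (rowKronId (imV uh) * Sig H)))
            (fromCols (α₄⁻¹ • (rowKronId (reV ph) * S₁))
              ((-(α₄⁻¹)) • (rowKronId (imV ph) * S₂))))
          (fromCols
            (fromCols (α₃⁻¹ • (rowKronId (imV uh) * Sig H))
              (α₃⁻¹ • (rowKronId (reV uh) * Sig H)))
            (fromCols (α₄⁻¹ • (rowKronId (imV ph) * S₁))
              (α₄⁻¹ • (rowKronId (reV ph) * S₂)))))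
    let I₁ : Matrix (Fin n ⊕ Fin n) ((Fin n ⊕ Fin n) ⊕ (Fin m ⊕ Fin m)) ℝ :=
      fromCols ((-(β₁⁻¹)) • (1 : Matrix (Fin n ⊕ Fin n) (Fin n ⊕ Fin n) ℝ)) 0
    let I₂ : Matrix (Fin m ⊕ Fin m) ((Fin n ⊕ Fin n) ⊕ (Fin m ⊕ Fin m)) ℝ :=
      fromCols 0 ((-(β₂⁻¹)) • (1 : Matrix (Fin m ⊕ Fin m) (Fin m ⊕ Fin m) ℝ))
    let M := fromBlocks M₁ I₁ M₂ I₂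
    let w : (Fin n ⊕ Fin n) ⊕ (Fin m ⊕ Fin m) → ℝ :=
      Sum.elim (Sum.elim (reV Q) (imV Q)) (Sum.elim (reV R) (imV R))
    IsUnit (M * Mᵀ) ∧
      IsLeast
        {t : ℝ | ∃ (ΔE : Matrix (Fin n) (Fin n) ℂ) (ΔF ΔH : Matrix (Fin m) (Fin n) ℂ)
            (ΔG : Matrix (Fin m) (Fin m) ℂ) (Δq : Fin n → ℂ) (Δr : Fin m → ℂ),
            ΔE.IsHermitian ∧ ΔG.IsHermitian ∧
            (E + ΔE.hadamard (theta E)) *ᵥ uh + (F + ΔF.hadamard (theta F))ᴴ *ᵥ ph = q + Δq ∧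
            (H + ΔH.hadamard (theta H)) *ᵥ uh + (G + ΔG.hadamard (theta G)) *ᵥ ph = r + Δr ∧
            t = zeta2 α₁ α₂ α₃ α₄ β₁ β₂ (ΔE.hadamard (theta E)) (ΔF.hadamard (theta F))
                  (ΔH.hadamard (theta H)) (ΔG.hadamard (theta G)) Δq Δr}
        (eunorm ((Mᵀ * (M * Mᵀ)⁻¹) *ᵥ w)) := by
  intro Q R N₁ N₂ S₁ S₂ M₁ M₂ I₁ I₂ M w
  have hunit : IsUnit (M * Mᵀ) :=
    beMatrix_isUnit E F H G uh ph α₁ α₂ α₃ α₄ β₁ β₂ hβ₁.ne' hβ₂.ne'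
  have hsolve := beMatrix_mulVec_eq_iff_perturbed_eq F H uh ph hE hG hα₁.ne' hα₂.ne' hα₃.ne'
    hα₄.ne' hβ₁.ne' hβ₂.ne' q r
  refine ⟨hunit, ?_, ?_⟩
  · have hmask : patternMask E F H G * ((Mᵀ * (M * Mᵀ)⁻¹) *ᵥ w) = (Mᵀ * (M * Mᵀ)⁻¹) *ᵥ w := by
      rw [← mulVec_mulVec]
      exact patternMask_mul_transpose_mulVec E F H G uh ph α₁ α₂ α₃ α₄ β₁ β₂ _
    obtain ⟨ΔE, ΔF, ΔH, ΔG, dq, dr, hΔE, hΔG, hx⟩ := exists_perturbationCoords_hadamard_eq E F H G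
      hα₁.ne' hα₂.ne' hα₃.ne' hα₄.ne' hβ₁.ne' hβ₂.ne' hmask
    obtain ⟨h₁, h₂⟩ := (hsolve ΔE ΔF ΔH ΔG dq dr hΔE hΔG).mp (hx ▸ mulVec_leastNorm hunit w)
    refine ⟨ΔE, ΔF, ΔH, ΔG, dq, dr, hΔE, hΔG, h₁, h₂, ?_⟩
    rw [zeta2_eq_eunorm_perturbationCoords (isHermitian_hadamard_theta hE hΔE)
      (isHermitian_hadamard_theta hG hΔG), hx]
  · rintro t ⟨ΔE, ΔF, ΔH, ΔG, dq, dr, hΔE, hΔG, h₁, h₂, rfl⟩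
    rw [zeta2_eq_eunorm_perturbationCoords (isHermitian_hadamard_theta hE hΔE)
      (isHermitian_hadamard_theta hG hΔG)]
    exact eunorm_leastNorm_le hunit w ((hsolve ΔE ΔF ΔH ΔG dq dr hΔE hΔG).mpr ⟨h₁, h₂⟩)

end GSPPBE
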